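/- Let p = 2, so Q(x) = 3/(2·cosh²(x/2)) and φ(x) = tanh(x/2). Then the functions A = −(4/3)·Q and B = −2·φ, together with the constant a = 2/3, solve the first resonance system (Ω_{1,0}): L A + a·(3Q − 2Q²) = 2Q and (L B)' + 3a·Q'' − 3A'' − 2Q·A = 2Q on ℝ. -/

import Mathlib

open Real

/-!
Write `φ x = tanh (x / 2)`. Everything follows from three identities: `φ ^ 2 = 1 - 2 Q / 3`,
`Q' = -Q φ` and `φ' = Q / 3`. They give the soliton equation `Q'' = Q - Q ^ 2`, hence
`L Q = -Q ^ 2`, and `L φ = φ (1 - 5 Q / 3)`, whose derivative is `2 Q - 5 Q ^ 2 / 3`.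
Since `L` commutes with scalars, both equations of the system become polynomial identities in `Q`.
-/

/-- The soliton profile for `p = 2`. -/
noncomputable def Q2 (x : ℝ) : ℝ := 3 / (2 * Real.cosh (x / 2) ^ 2)

/-- The linearized operator `L` around `Q` for `p = 2`. -/
noncomputable def Lop2 (w : ℝ → ℝ) (x : ℝ) : ℝ :=
  -deriv (deriv w) x + w x - 2 * Q2 x * w x

lemma tanh_half_sq (x : ℝ) : tanh (x / 2) ^ 2 = 1 - 2 / 3 * Q2 x := by
  have hc : cosh (x / 2) ≠ 0 := (cosh_pos _).ne'
  rw [tanh_eq_sinh_div_cosh, Q2]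
  field_simp
  linarith [cosh_sq (x / 2)]

lemma hasDerivAt_Q2 (x : ℝ) : HasDerivAt Q2 (-Q2 x * tanh (x / 2)) x := by
  have hc : cosh (x / 2) ≠ 0 := (cosh_pos _).ne'
  have hcosh : HasDerivAt (fun y => cosh (y / 2)) (sinh (x / 2) * (1 / 2)) x :=
    ((hasDerivAt_id x).div_const 2).cosh
  refine ((hasDerivAt_const x (3 : ℝ)).div ((hcosh.fun_pow 2).const_mul 2)
    (mul_ne_zero two_ne_zero (pow_ne_zero 2 hc))).congr_deriv ?_
  rw [Q2, tanh_eq_sinh_div_cosh]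
  field_simp
  ring

lemma hasDerivAt_tanh_half (x : ℝ) : HasDerivAt (fun y => tanh (y / 2)) (Q2 x / 3) x := by
  have hc : cosh (x / 2) ≠ 0 := (cosh_pos _).ne'
  have hhalf : HasDerivAt (fun y : ℝ => y / 2) (1 / 2) x := (hasDerivAt_id x).div_const 2
  simp only [tanh_eq_sinh_div_cosh]
  refine (hhalf.sinh.div hhalf.cosh hc).congr_deriv ?_
  rw [Q2]
  field_simp
  linarith [cosh_sq (x / 2)]

lemma deriv_Q2 : deriv Q2 = fun x => -Q2 x * tanh (x / 2) :=
  funext fun x => (hasDerivAt_Q2 x).deriv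

lemma deriv_deriv_Q2 (x : ℝ) : deriv (deriv Q2) x = Q2 x - Q2 x ^ 2 := by
  have h : HasDerivAt (fun y => -Q2 y * tanh (y / 2)) _ x :=
    (hasDerivAt_Q2 x).fun_neg.fun_mul (hasDerivAt_tanh_half x)
  rw [deriv_Q2, h.deriv]
  linear_combination Q2 x * tanh_half_sq x

lemma Lop2_const_mul (c : ℝ) (w : ℝ → ℝ) :
    Lop2 (fun y => c * w y) = fun x => c * Lop2 w x := by
  funext x
  simp only [Lop2, deriv_const_mul_field']
  ring

lemma Lop2_Q2 (x : ℝ) : Lop2 Q2 x = -Q2 x ^ 2 := by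
  rw [Lop2, deriv_deriv_Q2]
  ring

lemma Lop2_tanh_half :
    Lop2 (fun y => tanh (y / 2)) = fun x => tanh (x / 2) * (1 - 5 / 3 * Q2 x) := by
  have hφ' : deriv (fun y => tanh (y / 2)) = fun x => Q2 x / 3 :=
    funext fun x => (hasDerivAt_tanh_half x).deriv
  funext x
  rw [Lop2, hφ', deriv_div_const, deriv_Q2]
  ring

lemma hasDerivAt_Lop2_tanh_half (x : ℝ) :
    HasDerivAt (Lop2 fun y => tanh (y / 2)) (2 * Q2 x - 5 / 3 * Q2 x ^ 2) x := by
  have hfactor : HasDerivAt (fun y => 1 - 5 / 3 * Q2 y) (-(5 / 3 * (-Q2 x * tanh (x / 2)))) x :=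
    ((hasDerivAt_Q2 x).const_mul _).const_sub 1
  rw [Lop2_tanh_half]
  refine ((hasDerivAt_tanh_half x).fun_mul hfactor).congr_deriv ?_
  linear_combination (5 / 3) * Q2 x * tanh_half_sq x

theorem first_system_p2 :
    (∀ x : ℝ,
      Lop2 (fun y => -(4 / 3) * Q2 y) x + 2 / 3 * (3 * Q2 x - 2 * Q2 x ^ 2) = 2 * Q2 x) ∧
    (∀ x : ℝ,
      deriv (Lop2 (fun y => -2 * Real.tanh (y / 2))) x
        + 3 * (2 / 3) * deriv (deriv Q2) x
        - 3 * deriv (deriv (fun y => -(4 / 3) * Q2 y)) x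
        - 2 * Q2 x * (-(4 / 3) * Q2 x) = 2 * Q2 x) := by
  refine ⟨fun x => ?_, fun x => ?_⟩
  · simp only [Lop2_const_mul, Lop2_Q2]
    ring
  · simp only [Lop2_const_mul, deriv_const_mul_field', (hasDerivAt_Lop2_tanh_half x).deriv,
      deriv_deriv_Q2]
    ring
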